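/- arXiv:1905.06296 — 4 statements merged into one kernel-verified Lean document; each statement's English description precedes it below -/
import Mathlib

section
/- Let n ≥ 2 be an integer, let a1, a2, a3 ∈ Z_n, set a = a1 + a2 + a3, and suppose a is a unit of Z_n. Then for any positive integer k, there exists an exact k-coloring of Z_n with no rainbow solution to the equation a1·x1 + a2·x2 + a3·x3 = b if and only if there exists an exact k-coloring of Z_n with no rainbow solution to the equation a1·x1 + a2·x2 + a3·x3 = 0. -/
/-! Translating a solution by `t` shifts the right-hand side by `(a₁ + a₂ + a₃) * t` and keeps
the colors, so the translated coloring `x ↦ c (x + t)` carries rainbow solutions for `b` to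
rainbow solutions for `b + (a₁ + a₂ + a₃) * t` and back; when `a₁ + a₂ + a₃` is a unit, every
`b` is reached from `0`. -/

/-- A rainbow solution to `a₁x₁ + a₂x₂ + a₃x₃ = b` in `ZMod n` under coloring `c`. -/
def HasRainbowSolution {n r : ℕ} (a₁ a₂ a₃ b : ZMod n) (c : ZMod n → Fin r) : Prop :=
  ∃ s₁ s₂ s₃ : ZMod n, a₁ * s₁ + a₂ * s₂ + a₃ * s₃ = b ∧
    c s₁ ≠ c s₂ ∧ c s₁ ≠ c s₃ ∧ c s₂ ≠ c s₃

section Translation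

variable {n r : ℕ} (a₁ a₂ a₃ : ZMod n)

theorem hasRainbowSolution_comp_add_right_iff (b t : ZMod n) (c : ZMod n → Fin r) :
    HasRainbowSolution a₁ a₂ a₃ b (fun x => c (x + t)) ↔
      HasRainbowSolution a₁ a₂ a₃ (b + (a₁ + a₂ + a₃) * t) c := by
  constructor
  · rintro ⟨s₁, s₂, s₃, hs, h₁₂, h₁₃, h₂₃⟩
    exact ⟨s₁ + t, s₂ + t, s₃ + t, by rw [← hs]; ring, h₁₂, h₁₃, h₂₃⟩
  · rintro ⟨s₁, s₂, s₃, hs, h₁₂, h₁₃, h₂₃⟩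
    refine ⟨s₁ - t, s₂ - t, s₃ - t, by linear_combination hs, ?_, ?_, ?_⟩ <;>
      simpa only [sub_add_cancel]

theorem exists_surjective_not_hasRainbowSolution_of_add (b t : ZMod n)
    (h : ∃ c : ZMod n → Fin r, Function.Surjective c ∧
      ¬ HasRainbowSolution a₁ a₂ a₃ (b + (a₁ + a₂ + a₃) * t) c) :
    ∃ c : ZMod n → Fin r, Function.Surjective c ∧ ¬ HasRainbowSolution a₁ a₂ a₃ b c := by
  obtain ⟨c, hc, hno⟩ := h
  exact ⟨fun x => c (x + t), hc.comp (add_right_surjective t),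
    (hasRainbowSolution_comp_add_right_iff a₁ a₂ a₃ b t c).not.mpr hno⟩

theorem exists_surjective_not_hasRainbowSolution_congr {b b' : ZMod n} (t : ZMod n)
    (h : b' = b + (a₁ + a₂ + a₃) * t) :
    (∃ c : ZMod n → Fin r, Function.Surjective c ∧ ¬ HasRainbowSolution a₁ a₂ a₃ b c) ↔
      (∃ c : ZMod n → Fin r, Function.Surjective c ∧ ¬ HasRainbowSolution a₁ a₂ a₃ b' c) := by
  subst h
  refine ⟨fun hb => exists_surjective_not_hasRainbowSolution_of_add a₁ a₂ a₃ _ (-t) ?_,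
    exists_surjective_not_hasRainbowSolution_of_add a₁ a₂ a₃ b t⟩
  rwa [mul_neg, add_neg_cancel_right]

end Translation

theorem stmt_0_general (n : ℕ) (a₁ a₂ a₃ b : ZMod n)
    (ha : IsUnit (a₁ + a₂ + a₃)) (k : ℕ) :
    (∃ c : ZMod n → Fin k, Function.Surjective c ∧ ¬ HasRainbowSolution a₁ a₂ a₃ b c) ↔
    (∃ c : ZMod n → Fin k, Function.Surjective c ∧ ¬ HasRainbowSolution a₁ a₂ a₃ 0 c) := by
  refine (exists_surjective_not_hasRainbowSolution_congr a₁ a₂ a₃ (↑ha.unit⁻¹ * b) ?_).symm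
  rw [zero_add, ← mul_assoc, IsUnit.mul_val_inv, one_mul]

theorem stmt_0 (n : ℕ) (hn : 2 ≤ n) (a₁ a₂ a₃ b : ZMod n)
    (ha : IsUnit (a₁ + a₂ + a₃)) (k : ℕ) (hk : 0 < k) :
    (∃ c : ZMod n → Fin k, Function.Surjective c ∧ ¬ HasRainbowSolution a₁ a₂ a₃ b c) ↔
    (∃ c : ZMod n → Fin k, Function.Surjective c ∧ ¬ HasRainbowSolution a₁ a₂ a₃ 0 c) :=
  stmt_0_general n a₁ a₂ a₃ b ha k
end

section
/- Let a1, a2, a3, b ∈ Z_3. The rainbow number rb(Z_3, eq(a1,a2,a3,b)) equals 3 if either (b = 0 and a_i = a_j for some i ≠ j) or (b ≠ 0 and a_i ≠ a_j for some i ≠ j), and equals 4 otherwise. -/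
/-- The rainbow number of `ZMod n` for the equation `a₁x₁ + a₂x₂ + a₃x₃ = b`:
the least positive `r` such that every exact (surjective) `r`-coloring of `ZMod n`
admits a rainbow solution.  (If an exact `n`-coloring has no rainbow solution, then,
since there are no surjective colorings with more than `n` colors, this infimum
is `n + 1`, matching the convention.) -/
noncomputable def rb (n : ℕ) (a₁ a₂ a₃ b : ZMod n) : ℕ :=
  sInf {r : ℕ | 0 < r ∧
    ∀ c : ZMod n → Fin r, Function.Surjective c → HasRainbowSolution a₁ a₂ a₃ b c}

def HasDistinctSolution {n : ℕ} (a₁ a₂ a₃ b : ZMod n) : Prop :=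
  ∃ s₁ s₂ s₃ : ZMod n, a₁ * s₁ + a₂ * s₂ + a₃ * s₃ = b ∧ s₁ ≠ s₂ ∧ s₁ ≠ s₃ ∧ s₂ ≠ s₃

instance {n : ℕ} [NeZero n] (a₁ a₂ a₃ b : ZMod n) :
    Decidable (HasDistinctSolution a₁ a₂ a₃ b) := by
  unfold HasDistinctSolution; infer_instance

section Coloring

variable {n r : ℕ} {a₁ a₂ a₃ b : ZMod n} {c : ZMod n → Fin r}

theorem HasRainbowSolution.hasDistinctSolution (h : HasRainbowSolution a₁ a₂ a₃ b c) :
    HasDistinctSolution a₁ a₂ a₃ b := by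
  obtain ⟨s₁, s₂, s₃, hs, h₁₂, h₁₃, h₂₃⟩ := h
  exact ⟨s₁, s₂, s₃, hs, ne_of_apply_ne c h₁₂, ne_of_apply_ne c h₁₃, ne_of_apply_ne c h₂₃⟩

theorem HasDistinctSolution.hasRainbowSolution (h : HasDistinctSolution a₁ a₂ a₃ b)
    (hc : Function.Injective c) : HasRainbowSolution a₁ a₂ a₃ b c := by
  obtain ⟨s₁, s₂, s₃, hs, h₁₂, h₁₃, h₂₃⟩ := h
  exact ⟨s₁, s₂, s₃, hs, hc.ne h₁₂, hc.ne h₁₃, hc.ne h₂₃⟩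

theorem not_hasRainbowSolution_of_lt_three (hr : r < 3) : ¬ HasRainbowSolution a₁ a₂ a₃ b c := by
  rintro ⟨s₁, s₂, s₃, -, h₁₂, h₁₃, h₂₃⟩
  rw [Ne, Fin.ext_iff] at h₁₂ h₁₃ h₂₃
  have := (c s₁).isLt; have := (c s₂).isLt; have := (c s₃).isLt
  omega

theorem exists_surjective_coloring [NeZero n] (hr : 0 < r) (hrn : r ≤ n) :
    ∃ c : ZMod n → Fin r, Function.Surjective c := by
  have : Nonempty (Fin r) := ⟨⟨0, hr⟩⟩
  obtain ⟨e⟩ := Function.Embedding.nonempty_of_card_le (α := Fin r) (β := ZMod n)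
    (by simpa using hrn)
  exact ⟨Function.invFun e, Function.invFun_surjective e.injective⟩

end Coloring

section RainbowNumber

variable {n : ℕ} (a₁ a₂ a₃ b : ZMod n)

theorem rb_le {r : ℕ} (hr : 0 < r)
    (h : ∀ c : ZMod n → Fin r, Function.Surjective c → HasRainbowSolution a₁ a₂ a₃ b c) :
    rb n a₁ a₂ a₃ b ≤ r :=
  Nat.sInf_le ⟨hr, h⟩

theorem not_surjective_fin_succ [NeZero n] (c : ZMod n → Fin (n + 1)) :
    ¬ Function.Surjective c := fun hc => by
  simpa using Fintype.card_le_of_surjective c hc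

theorem rb_le_succ [NeZero n] : rb n a₁ a₂ a₃ b ≤ n + 1 :=
  rb_le a₁ a₂ a₃ b n.succ_pos fun c hc => absurd hc (not_surjective_fin_succ c)

theorem rb_pos_and_forall_hasRainbowSolution [NeZero n] :
    0 < rb n a₁ a₂ a₃ b ∧ ∀ c : ZMod n → Fin (rb n a₁ a₂ a₃ b), Function.Surjective c →
      HasRainbowSolution a₁ a₂ a₃ b c := by
  have hne : Set.Nonempty {r : ℕ | 0 < r ∧
      ∀ c : ZMod n → Fin r, Function.Surjective c → HasRainbowSolution a₁ a₂ a₃ b c} :=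
    ⟨n + 1, n.succ_pos, fun c hc => absurd hc (not_surjective_fin_succ c)⟩
  exact Nat.sInf_mem hne

theorem three_le_rb [NeZero n] (hn : 2 ≤ n) : 3 ≤ rb n a₁ a₂ a₃ b := by
  obtain ⟨hpos, hrb⟩ := rb_pos_and_forall_hasRainbowSolution a₁ a₂ a₃ b
  by_contra! hlt
  obtain ⟨c, hc⟩ := exists_surjective_coloring hpos (by omega : rb n a₁ a₂ a₃ b ≤ n)
  exact not_hasRainbowSolution_of_lt_three hlt (hrb c hc)

end RainbowNumber

theorem rb_three (a₁ a₂ a₃ b : ZMod 3) :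
    rb 3 a₁ a₂ a₃ b = if HasDistinctSolution a₁ a₂ a₃ b then 3 else 4 := by
  have hlow := three_le_rb a₁ a₂ a₃ b (by norm_num)
  split_ifs with h
  · refine le_antisymm (rb_le a₁ a₂ a₃ b three_pos fun c hc => ?_) hlow
    exact h.hasRainbowSolution ((Fintype.bijective_iff_surjective_and_card c).2 ⟨hc, by simp⟩).1
  · refine le_antisymm (rb_le_succ a₁ a₂ a₃ b) ?_
    by_contra! hlt
    obtain ⟨hpos, hrb⟩ := rb_pos_and_forall_hasRainbowSolution a₁ a₂ a₃ b
    obtain ⟨c, hc⟩ := exists_surjective_coloring hpos (by omega : rb 3 a₁ a₂ a₃ b ≤ 3)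
    exact h (hrb c hc).hasDistinctSolution

theorem hasDistinctSolution_zmod_three_iff (a₁ a₂ a₃ b : ZMod 3) :
    HasDistinctSolution a₁ a₂ a₃ b ↔
      (b = 0 ∧ (a₁ = a₂ ∨ a₁ = a₃ ∨ a₂ = a₃)) ∨ (b ≠ 0 ∧ (a₁ ≠ a₂ ∨ a₁ ≠ a₃ ∨ a₂ ≠ a₃)) := by
  revert a₁ a₂ a₃ b
  decide

theorem stmt_2 (a₁ a₂ a₃ b : ZMod 3) :
    rb 3 a₁ a₂ a₃ b =
      if (b = 0 ∧ (a₁ = a₂ ∨ a₁ = a₃ ∨ a₂ = a₃)) ∨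
         (b ≠ 0 ∧ (a₁ ≠ a₂ ∨ a₁ ≠ a₃ ∨ a₂ ≠ a₃)) then 3 else 4 := by
  rw [rb_three, if_congr (hasDistinctSolution_zmod_three_iff a₁ a₂ a₃ b) rfl rfl]
end

section
/- If p ≥ 5 is a prime, a is a unit of Z_p, and b ∈ Z_p, then rb(Z_p, eq(a,a,a,b)) = 4. -/
/-!
Dividing by `a` turns the equation into `x + y + z = d` with `d = a⁻¹ b`.

Three colors do not suffice: with `3e = d`, color `e`, the pair `e ± 1` and the rest separately.
A rainbow solution would contain `e`, and then the other two points are mirror images about `e`.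

Four colors do: suppose `c` is rainbow-free with at least four colors. For `x`, `y` of different
colors the third point `d - x - y` has the color of one of them; say that `x` beats `y` if it has
the color of `x`. The engine is that a color class which is a nonempty proper subset of `ℤ/p` and
invariant under the two reflections `w ↦ u - w`, `w ↦ v - w` forces `u = v`, since it is then
invariant under translation by `v - u`. Applied to a fourth color class, this excludes 3-cycles
`x → y → z → x` through three colors, so beating is transitive between distinct colors; applied
to a class that beats `x` entirely, it shows that such an `x` beats nothing. A maximality argument
produces such unbeating elements in two different colors, and one of them must beat the other.
-/

open Function Set

def RainbowFree {R κ : Type*} [Add R] (c : R → κ) (d : R) : Prop :=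
  ∀ x y z, x + y + z = d → c x = c y ∨ c x = c z ∨ c y = c z

def Beats {G κ : Type*} [Sub G] (c : G → κ) (d x y : G) : Prop :=
  c x ≠ c y ∧ c (d - x - y) = c x

section AddCommGroup

variable {G κ : Type*} [AddCommGroup G] {c : G → κ} {d x y : G}

lemma RainbowFree.color_sub_sub (hrf : RainbowFree c d) (h : c x ≠ c y) :
    c (d - x - y) = c x ∨ c (d - x - y) = c y := by
  rcases hrf x y (d - x - y) (by abel) with h' | h' | h'
  · exact absurd h' h
  · exact Or.inl h'.symm
  · exact Or.inr h'.symm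

lemma RainbowFree.beats_or_beats (hrf : RainbowFree c d) (h : c x ≠ c y) :
    Beats c d x y ∨ Beats c d y x := by
  rw [Beats, Beats, sub_right_comm d y x]
  rcases hrf.color_sub_sub h with h' | h'
  · exact Or.inl ⟨h, h'⟩
  · exact Or.inr ⟨Ne.symm h, h'⟩

lemma Beats.not_beats (h : Beats c d x y) : ¬ Beats c d y x := fun h' =>
  h.1 (by rw [← h.2, ← h'.2, sub_right_comm])

end AddCommGroup

section ZModPrime

variable {p : ℕ} [Fact p.Prime]

lemma ZMod.eq_zero_of_forall_add_mem {s : Set (ZMod p)} {u v g : ZMod p} (hu : u ∈ s) (hv : v ∉ s)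
    (hg : ∀ w ∈ s, w + g ∈ s) : g = 0 := by
  by_contra hg0
  have hmul : ∀ n : ℕ, u + n * g ∈ s := by
    intro n
    induction n with
    | zero => simpa using hu
    | succ n ih => simpa [add_mul, add_assoc] using hg _ ih
  have := hmul ((v - u) * g⁻¹).val
  rw [ZMod.natCast_zmod_val, inv_mul_cancel_right₀ hg0, add_sub_cancel] at this
  exact hv this

lemma ZMod.eq_of_forall_sub_mem {s : Set (ZMod p)} {u v w₀ w₁ : ZMod p} (hw₀ : w₀ ∈ s) (hw₁ : w₁ ∉ s)
    (hu : ∀ w ∈ s, u - w ∈ s) (hv : ∀ w ∈ s, v - w ∈ s) : u = v := by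
  refine (sub_eq_zero.1 (ZMod.eq_zero_of_forall_add_mem hw₀ hw₁ fun w hw => ?_)).symm
  rw [show w + (v - u) = v - (u - w) by abel]
  exact hv _ (hu w hw)

variable {κ : Type*} {c : ZMod p → κ} {d : ZMod p}

lemma eq_of_color_sub_sub {u x y : ZMod p} (hx : c x ≠ c u)
    (hxu : ∀ w, c w = c u → c (d - x - w) = c u) (hyu : ∀ w, c w = c u → c (d - y - w) = c u) :
    x = y :=
  sub_right_inj.1 (ZMod.eq_of_forall_sub_mem (s := {w | c w = c u}) rfl hx hxu hyu)

lemma RainbowFree.color_sub_of_beats_cycle (hrf : RainbowFree c d) {x y z v : ZMod p}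
    (hxy : Beats c d x y) (hyz : Beats c d y z) (hzx : Beats c d z x)
    (hvx : c v ≠ c x) (hvy : c v ≠ c y) (hvz : c v ≠ c z) :
    c (d - x - v) = c v ∧ c (d - y - v) = c v := by
  rw [sub_right_comm d x, sub_right_comm d y]
  have hx := hrf.color_sub_sub hvx
  have hy := hrf.color_sub_sub hvy
  have hz := hrf.color_sub_sub hvz
  -- `t` is the third point of each of the pairs `(d - v - x, d - y - z)`, `(d - v - y, d - z - x)`
  -- and `(d - v - z, d - x - y)`.
  set t := v + x + y + z - d
  have third : ∀ a b e, a + b + e = x + y + z → c (d - v - a) ≠ c (d - b - e) →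
      c t = c (d - v - a) ∨ c t = c (d - b - e) := fun a b e habe h => by
    rw [show t = d - (d - v - a) - (d - b - e) by linear_combination -habe]
    exact hrf.color_sub_sub h
  have h₁ := third x y z rfl
  have h₂ := third y z x (by abel)
  have h₃ := third z x y (by abel)
  rw [hyz.2] at h₁
  rw [hzx.2] at h₂
  rw [hxy.2] at h₃
  have := hxy.1; have := hyz.1; have := hzx.1
  -- So `c t` can be none of `c x`, `c y`, `c z`; it is `c v`, which pins down the first two pairs.
  grind

lemma RainbowFree.not_beats_cycle (hrf : RainbowFree c d)
    (h4 : ∀ X Y Z : κ, ∃ w, c w ≠ X ∧ c w ≠ Y ∧ c w ≠ Z) {x y z : ZMod p}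
    (hxy : Beats c d x y) (hyz : Beats c d y z) (hzx : Beats c d z x) : False := by
  obtain ⟨w, hwx, hwy, hwz⟩ := h4 (c x) (c y) (c z)
  have hcycle : ∀ v, c v = c w → c (d - x - v) = c w ∧ c (d - y - v) = c w := fun v hv => by
    rw [← hv]
    exact hrf.color_sub_of_beats_cycle hxy hyz hzx (hv ▸ hwx) (hv ▸ hwy) (hv ▸ hwz)
  exact hxy.1 (by
    rw [eq_of_color_sub_sub (Ne.symm hwx) (fun v hv => (hcycle v hv).1) fun v hv => (hcycle v hv).2])

lemma RainbowFree.beats_trans (hrf : RainbowFree c d)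
    (h4 : ∀ X Y Z : κ, ∃ w, c w ≠ X ∧ c w ≠ Y ∧ c w ≠ Z) {x y z : ZMod p} (hxz : c x ≠ c z)
    (hxy : Beats c d x y) (hyz : Beats c d y z) : Beats c d x z :=
  (hrf.beats_or_beats hxz).resolve_right (hrf.not_beats_cycle h4 hxy hyz)

lemma RainbowFree.not_beats_of_forall_beats (hrf : RainbowFree c d)
    (h4 : ∀ X Y Z : κ, ∃ w, c w ≠ X ∧ c w ≠ Y ∧ c w ≠ Z) {u x : ZMod p}
    (h : ∀ w, c w = c u → Beats c d w x) (y : ZMod p) : ¬ Beats c d x y := by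
  intro hxy
  have hyu : c y ≠ c u := fun hyu => (h y hyu).not_beats hxy
  have hy : ∀ w, c w = c u → Beats c d w y := fun w hw =>
    hrf.beats_trans h4 (hw ▸ Ne.symm hyu) (h w hw) hxy
  have hxy_eq := eq_of_color_sub_sub (h u rfl).1.symm
    (fun w hw => by rw [sub_right_comm, (h w hw).2, hw])
    (fun w hw => by rw [sub_right_comm, (hy w hw).2, hw])
  exact hxy.1 (by rw [hxy_eq])

lemma RainbowFree.exists_not_beats_of_three (hrf : RainbowFree c d)
    (h4 : ∀ X Y Z : κ, ∃ w, c w ≠ X ∧ c w ≠ Y ∧ c w ≠ Z) {u₁ u₂ u₃ : ZMod p}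
    (h₁₂ : c u₁ ≠ c u₂) (h₁₃ : c u₁ ≠ c u₃) (h₂₃ : c u₂ ≠ c u₃) :
    ∃ t, (c t = c u₁ ∨ c t = c u₂ ∨ c t = c u₃) ∧ ∀ y, ¬ Beats c d t y := by
  let beatenBy (u : ZMod p) : Set (ZMod p) := {w | c w = c u₃ ∧ Beats c d w u}
  obtain ⟨u, hu, hmax⟩ := (toFinite {u | c u = c u₁ ∨ c u = c u₂}).exists_maximalFor
    beatenBy _ ⟨u₁, Or.inl rfl⟩
  by_cases! hall : ∀ w, c w = c u₃ → Beats c d w u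
  · exact ⟨u, Or.imp_right Or.inl hu, hrf.not_beats_of_forall_beats h4 hall⟩
  obtain ⟨α, hα, hαu⟩ := hall
  have huα : Beats c d u α := (hrf.beats_or_beats (by grind)).resolve_right hαu
  obtain ⟨u', hu', hu'u⟩ : ∃ u', (c u' = c u₁ ∨ c u' = c u₂) ∧ c u' ≠ c u := by
    rcases hu with h | h
    · exact ⟨u₂, Or.inr rfl, h ▸ h₁₂.symm⟩
    · exact ⟨u₁, Or.inl rfl, h ▸ h₁₂⟩
  refine ⟨α, Or.inr (Or.inr hα), hrf.not_beats_of_forall_beats h4 (u := u') fun v hv => ?_⟩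
  by_contra hvα
  have hαv : Beats c d α v := (hrf.beats_or_beats (by grind)).resolve_right hvα
  have huv : Beats c d u v := hrf.beats_trans h4 (hv ▸ hu'u.symm) huα hαv
  -- `beatenBy u ⊆ beatenBy v`, and `α` witnesses that the inclusion is strict.
  have hsub : beatenBy u ⊆ beatenBy v := fun w ⟨hw, hwu⟩ =>
    ⟨hw, hrf.beats_trans h4 (by grind) hwu huv⟩
  exact hαu (hmax (show c v = c u₁ ∨ c v = c u₂ by rwa [hv]) hsub ⟨hα, hαv⟩).2

lemma RainbowFree.exists_not_beats_of_ne (hrf : RainbowFree c d)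
    (h4 : ∀ X Y Z : κ, ∃ w, c w ≠ X ∧ c w ≠ Y ∧ c w ≠ Z) (m : κ) :
    ∃ t, c t ≠ m ∧ ∀ y, ¬ Beats c d t y := by
  obtain ⟨u₁, h₁, -⟩ := h4 m m m
  obtain ⟨u₂, h₂, h₂₁, -⟩ := h4 m (c u₁) m
  obtain ⟨u₃, h₃, h₃₁, h₃₂⟩ := h4 m (c u₁) (c u₂)
  obtain ⟨t, ht, hbot⟩ := hrf.exists_not_beats_of_three h4 (Ne.symm h₂₁) (Ne.symm h₃₁) (Ne.symm h₃₂)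
  exact ⟨t, by grind, hbot⟩

lemma RainbowFree.exists_forall_eq_or_eq_or_eq (hrf : RainbowFree c d) :
    ∃ X Y Z : κ, ∀ w, c w = X ∨ c w = Y ∨ c w = Z := by
  by_contra! h4
  obtain ⟨t₁, -, hbot₁⟩ := hrf.exists_not_beats_of_ne h4 (c 0)
  obtain ⟨t₂, ht₂, hbot₂⟩ := hrf.exists_not_beats_of_ne h4 (c t₁)
  rcases hrf.beats_or_beats ht₂ with h | h
  · exact hbot₂ t₁ h
  · exact hbot₁ t₂ h

end ZModPrime

section LowerBound

variable {R : Type*} [CommRing R]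

lemma rainbowFree_comp_sub_of_even {f : R → Fin 3} (hf : ∀ u, f (-u) = f u)
    (hf0 : ∀ u, f u = f 0 → u = 0) (e : R) : RainbowFree (fun x => f (x - e)) (3 * e) := by
  intro x y z hxyz
  -- Once one of the three points is `e`, the other two are mirror images about `e`.
  have mirror : ∀ u v w : R, u + v + w = 0 → f u = f 0 → f v = f w := fun u v w h hu => by
    rw [← hf w, show -w = v by linear_combination -h + hf0 u hu]
  have hsum : (x - e) + (y - e) + (z - e) = 0 := by linear_combination hxyz
  by_contra! h
  have fin_three : ∀ a b c t : Fin 3, a ≠ b → a ≠ c → b ≠ c → t = a ∨ t = b ∨ t = c := by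
    decide
  rcases fin_three _ _ _ (f 0) h.1 h.2.1 h.2.2 with h0 | h0 | h0
  · exact h.2.2 (mirror _ _ _ hsum h0.symm)
  · exact h.2.1 (mirror (y - e) (x - e) (z - e) (by linear_combination hsum) h0.symm)
  · exact h.1 (mirror (z - e) (x - e) (y - e) (by linear_combination hsum) h0.symm)

variable [DecidableEq R]

def pmOneClass (u : R) : Fin 3 := if u = 0 then 0 else if u ^ 2 = 1 then 1 else 2

lemma pmOneClass_neg (u : R) : pmOneClass (-u) = pmOneClass u := by
  simp only [pmOneClass, neg_eq_zero, neg_sq]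

lemma eq_zero_of_pmOneClass_eq (u : R) (h : pmOneClass u = pmOneClass (0 : R)) : u = 0 := by
  unfold pmOneClass at h
  split_ifs at h <;> simp_all

lemma pmOneClass_surjective [Nontrivial R] (h2 : (2 : R) ≠ 0) (h3 : (3 : R) ≠ 0) :
    Surjective (pmOneClass : R → Fin 3) := by
  have h4 : (2 : R) ^ 2 ≠ 1 := fun h => h3 (by linear_combination h)
  intro i
  fin_cases i
  · exact ⟨0, by simp [pmOneClass]⟩
  · exact ⟨1, by simp [pmOneClass]⟩
  · exact ⟨2, by simp [pmOneClass, h2, h4]⟩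

end LowerBound

lemma hasRainbowSolution_iff {n r : ℕ} {a b : ZMod n} (ha : IsUnit a) (c : ZMod n → Fin r) :
    HasRainbowSolution a a a b c ↔ ¬ RainbowFree c (a⁻¹ * b) := by
  have hsol : ∀ x y z : ZMod n, a * x + a * y + a * z = b ↔ x + y + z = a⁻¹ * b := by
    intro x y z
    rw [← mul_add, ← mul_add]
    constructor
    · intro h
      rw [← h, ← mul_assoc, ZMod.inv_mul_of_unit a ha, one_mul]
    · intro h
      rw [h, ← mul_assoc, ZMod.mul_inv_of_unit a ha, one_mul]
  simp only [HasRainbowSolution, RainbowFree, hsol]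
  push Not
  rfl

lemma rb_eq_of_forall_lt {n m : ℕ} {a₁ a₂ a₃ b : ZMod n} (hm : 0 < m)
    (hrb : ∀ c : ZMod n → Fin m, Surjective c → HasRainbowSolution a₁ a₂ a₃ b c)
    (hlt : ∀ r, 0 < r → r < m →
      ∃ c : ZMod n → Fin r, Surjective c ∧ ¬ HasRainbowSolution a₁ a₂ a₃ b c) :
    rb n a₁ a₂ a₃ b = m := by
  have hmem : m ∈ {r : ℕ | 0 < r ∧
      ∀ c : ZMod n → Fin r, Surjective c → HasRainbowSolution a₁ a₂ a₃ b c} := ⟨hm, hrb⟩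
  refine le_antisymm (Nat.sInf_le hmem) (le_csInf ⟨m, hmem⟩ fun r ⟨hr, hrc⟩ => ?_)
  by_contra! hrm
  obtain ⟨c, hc, hfree⟩ := hlt r hr hrm
  exact hfree (hrc c hc)

lemma not_hasRainbowSolution_of_le_two {n r : ℕ} {a₁ a₂ a₃ b : ZMod n} (c : ZMod n → Fin r)
    (hr : r ≤ 2) : ¬ HasRainbowSolution a₁ a₂ a₃ b c := by
  rintro ⟨x, y, z, -, hxy, hxz, hyz⟩
  simp only [ne_eq, Fin.ext_iff] at hxy hxz hyz
  omega

lemma exists_surjective_zmod_fin {n r : ℕ} [NeZero n] (hr : 0 < r) (hrn : r ≤ n) :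
    ∃ c : ZMod n → Fin r, Surjective c :=
  exists_surjective_iff.2 ⟨⟨fun _ => ⟨0, hr⟩⟩, Embedding.nonempty_of_card_le (by simpa using hrn)⟩

theorem stmt_5 (p : ℕ) (hp : p.Prime) (hp5 : 5 ≤ p) (a b : ZMod p) (ha : IsUnit a) :
    rb p a a a b = 4 := by
  have := Fact.mk hp
  have hsmall : ∀ k : ℕ, 0 < k → k < 5 → (k : ZMod p) ≠ 0 := fun k hk hk5 h =>
    absurd (Nat.le_of_dvd hk ((ZMod.natCast_eq_zero_iff k p).1 h)) (by omega)
  refine rb_eq_of_forall_lt (by norm_num) (fun c hc => ?_) fun r hr hr4 => ?_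
  · rw [hasRainbowSolution_iff ha]
    intro hrf
    obtain ⟨X, Y, Z, hXYZ⟩ := hrf.exists_forall_eq_or_eq_or_eq
    obtain ⟨i, hi⟩ : ∃ i : Fin 4, i ≠ X ∧ i ≠ Y ∧ i ≠ Z := by clear hXYZ; revert X Y Z; decide
    obtain ⟨w, rfl⟩ := hc i
    grind
  obtain hr2 | rfl : r ≤ 2 ∨ r = 3 := by omega
  · obtain ⟨c, hc⟩ := exists_surjective_zmod_fin hr (by omega : r ≤ p)
    exact ⟨c, hc, not_hasRainbowSolution_of_le_two c hr2⟩
  have h3 : (3 : ZMod p) ≠ 0 := by exact_mod_cast hsmall 3 (by norm_num) (by norm_num)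
  refine ⟨fun x => pmOneClass (x - 3⁻¹ * (a⁻¹ * b)),
    (pmOneClass_surjective (by exact_mod_cast hsmall 2 (by norm_num) (by norm_num)) h3).comp
      (Equiv.subRight _).surjective, ?_⟩
  rw [hasRainbowSolution_iff ha, not_not]
  have := rainbowFree_comp_sub_of_even pmOneClass_neg eq_zero_of_pmOneClass_eq (3⁻¹ * (a⁻¹ * b))
  rwa [mul_inv_cancel_left₀ h3] at this
end

section
/- Let α ≥ 1 be an integer and let a1, a2, a3, b be integers such that a1, a2, a3 are all odd. Then rb(Z_{2^α}, eq(a1,a2,a3,b)) = α + 2. -/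
open Finset Function

lemma rb_eq_of {n k : ℕ} {a₁ a₂ a₃ b : ZMod n} (hk : 0 < k)
    (hupper : ∀ c : ZMod n → Fin k, Surjective c → HasRainbowSolution a₁ a₂ a₃ b c)
    (hlower : ∀ m, m + 1 < k →
      ∃ c : ZMod n → Fin (m + 1), Surjective c ∧ ¬ HasRainbowSolution a₁ a₂ a₃ b c) :
    rb n a₁ a₂ a₃ b = k := by
  refine le_antisymm (Nat.sInf_le ⟨hk, hupper⟩) (le_csInf ⟨k, hk, hupper⟩ ?_)
  rintro r ⟨hr, hrainbow⟩
  by_contra! hrk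
  obtain ⟨m, rfl⟩ := Nat.exists_eq_add_one_of_ne_zero hr.ne'
  obtain ⟨c, hc, hfree⟩ := hlower m hrk
  exact hfree (hrainbow c hc)

lemma hasRainbowSolution_comp_add_iff {n r : ℕ} {a₁ a₂ a₃ b x₀ : ZMod n}
    (hx₀ : b = (a₁ + a₂ + a₃) * x₀) (c : ZMod n → Fin r) :
    HasRainbowSolution a₁ a₂ a₃ 0 (fun x => c (x + x₀)) ↔ HasRainbowSolution a₁ a₂ a₃ b c := by
  constructor
  · rintro ⟨s₁, s₂, s₃, hs, h₁₂, h₁₃, h₂₃⟩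
    exact ⟨s₁ + x₀, s₂ + x₀, s₃ + x₀, by linear_combination hs - hx₀, h₁₂, h₁₃, h₂₃⟩
  · rintro ⟨s₁, s₂, s₃, hs, h₁₂, h₁₃, h₂₃⟩
    refine ⟨s₁ - x₀, s₂ - x₀, s₃ - x₀, by linear_combination hs + hx₀, ?_⟩
    simpa only [sub_add_cancel] using ⟨h₁₂, h₁₃, h₂₃⟩

lemma rb_eq_rb_zero {n : ℕ} {a₁ a₂ a₃ b x₀ : ZMod n} (hx₀ : b = (a₁ + a₂ + a₃) * x₀) :
    rb n a₁ a₂ a₃ b = rb n a₁ a₂ a₃ 0 := by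
  unfold rb
  congr! 3 with r
  refine and_congr_right fun _ => ⟨fun h c hc => ?_, fun h c hc => ?_⟩
  · have := h (fun x => c (x - x₀)) (hc.comp (Equiv.subRight x₀).surjective)
    rw [← hasRainbowSolution_comp_add_iff hx₀] at this
    simpa only [add_sub_cancel_right] using this
  · rw [← hasRainbowSolution_comp_add_iff hx₀]
    exact h _ (hc.comp (Equiv.addRight x₀).surjective)

lemma isUnit_intCast_of_odd {R : Type*} [CommRing R] (h2 : IsNilpotent (2 : R)) {a : ℤ}
    (ha : Odd a) : IsUnit (a : R) := by
  obtain ⟨k, rfl⟩ := ha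
  have : IsNilpotent ((2 : R) * k) := (Commute.all _ _).isNilpotent_mul_right h2
  simpa [add_comm] using this.isUnit_one_add

lemma isNilpotent_two_zmod_two_pow (α : ℕ) : IsNilpotent (2 : ZMod (2 ^ α)) :=
  ⟨α, by exact_mod_cast ZMod.natCast_self (2 ^ α)⟩

lemma dvd_of_add_add_eq_zero {R : Type*} [CommRing R] {a₁ a₂ a₃ x y z d : R} (h₁ : IsUnit a₁)
    (h : a₁ * x + a₂ * y + a₃ * z = 0) (hy : d ∣ y) (hz : d ∣ z) : d ∣ x := by
  have hx : a₁ * x = -(a₂ * y + a₃ * z) := by linear_combination h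
  rw [← h₁.dvd_mul_left, hx]
  exact (dvd_add (hy.mul_left a₂) (hz.mul_left a₃)).neg_right

section PowDvdColoring

variable {n : ℕ}

open Classical

noncomputable def powDvdColoring (p : ZMod n) (m : ℕ) (x : ZMod n) : Fin (m + 1) :=
  ⟨Nat.findGreatest (fun i => p ^ i ∣ x) m, Nat.lt_succ_of_le (Nat.findGreatest_le m)⟩

lemma pow_powDvdColoring_dvd (p : ZMod n) (m : ℕ) (x : ZMod n) :
    p ^ (powDvdColoring p m x : ℕ) ∣ x :=
  Nat.findGreatest_spec (P := fun i => p ^ i ∣ x) (Nat.zero_le m) (by simp)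

lemma le_powDvdColoring {p : ZMod n} {m i : ℕ} {x : ZMod n} (hi : i ≤ m) (hx : p ^ i ∣ x) :
    i ≤ powDvdColoring p m x :=
  Nat.le_findGreatest (P := fun i => p ^ i ∣ x) hi hx

lemma not_powDvdColoring_lt_and_lt {p : ZMod n} {m : ℕ} {a₁ a₂ a₃ x y z : ZMod n}
    (h₁ : IsUnit a₁) (h : a₁ * x + a₂ * y + a₃ * z = 0) :
    ¬ ((powDvdColoring p m x : ℕ) < powDvdColoring p m y ∧
      (powDvdColoring p m x : ℕ) < powDvdColoring p m z) := by
  rintro ⟨hy, hz⟩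
  set k := (powDvdColoring p m x : ℕ)
  have hdvd : ∀ w, k < powDvdColoring p m w → p ^ (k + 1) ∣ w := fun w hw =>
    (pow_dvd_pow p hw).trans (pow_powDvdColoring_dvd p m w)
  have hkm : k + 1 ≤ m := hy.trans_le (powDvdColoring p m y).is_le
  have := le_powDvdColoring hkm (dvd_of_add_add_eq_zero h₁ h (hdvd y hy) (hdvd z hz))
  omega

lemma not_hasRainbowSolution_powDvdColoring (p : ZMod n) (m : ℕ) {a₁ a₂ a₃ : ZMod n}
    (h₁ : IsUnit a₁) (h₂ : IsUnit a₂) (h₃ : IsUnit a₃) :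
    ¬ HasRainbowSolution a₁ a₂ a₃ 0 (powDvdColoring p m) := by
  rintro ⟨s₁, s₂, s₃, hs, h₁₂, h₁₃, h₂₃⟩
  have h₁ := not_powDvdColoring_lt_and_lt (p := p) (m := m) h₁ hs
  have h₂ := not_powDvdColoring_lt_and_lt (p := p) (m := m) h₂
    (by linear_combination hs : a₂ * s₂ + a₁ * s₁ + a₃ * s₃ = 0)
  have h₃ := not_powDvdColoring_lt_and_lt (p := p) (m := m) h₃
    (by linear_combination hs : a₃ * s₃ + a₁ * s₁ + a₂ * s₂ = 0)
  have := Fin.val_ne_of_ne h₁₂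
  have := Fin.val_ne_of_ne h₁₃
  have := Fin.val_ne_of_ne h₂₃
  omega

lemma ZMod.not_pow_dvd_pow {p α i k : ℕ} (hp : 1 < p) (hik : i < k) (hkα : k ≤ α) :
    ¬ (p : ZMod (p ^ α)) ^ k ∣ (p : ZMod (p ^ α)) ^ i := by
  intro h
  have := map_dvd (ZMod.castHom (pow_dvd_pow p hkα) (ZMod (p ^ k))) h
  simp only [map_pow, map_natCast] at this
  rw [← Nat.cast_pow, ZMod.natCast_self, zero_dvd_iff, ← Nat.cast_pow,
    ZMod.natCast_eq_zero_iff, Nat.pow_dvd_pow_iff_le_right hp] at this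
  omega

lemma powDvdColoring_pow {p α m i : ℕ} (hp : 1 < p) (hmα : m ≤ α) (him : i ≤ m) :
    (powDvdColoring (p : ZMod (p ^ α)) m ((p : ZMod (p ^ α)) ^ i) : ℕ) = i :=
  Nat.findGreatest_eq_iff.mpr ⟨him, fun _ => dvd_rfl, fun _ hik hkm =>
    ZMod.not_pow_dvd_pow hp hik (hkm.trans hmα)⟩

lemma powDvdColoring_surjective {p α m : ℕ} (hp : 1 < p) (hmα : m ≤ α) :
    Surjective (powDvdColoring (p : ZMod (p ^ α)) m) := fun i =>
  ⟨_, Fin.ext (powDvdColoring_pow hp hmα i.is_le)⟩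

end PowDvdColoring

section TwoPowFiltration

variable {n r : ℕ} {a₁ a₂ a₃ : ℤ}

lemma ZMod.exists_eq_two_mul_or_eq_two_mul_add_one (x : ZMod n) :
    ∃ k, x = 2 * k ∨ x = 2 * k + 1 := by
  obtain ⟨z, rfl⟩ := ZMod.intCast_surjective x
  obtain ⟨k, rfl | rfl⟩ := Int.even_or_odd' z <;> exact ⟨k, by push_cast; tauto⟩

lemma ZMod.two_pow_succ_dvd_mul_add_mul {j : ℕ} {x z : ZMod n} (h₁ : Odd a₁) (h₂ : Odd a₂)
    (hx : 2 ^ j ∣ x) (hx' : ¬ 2 ^ (j + 1) ∣ x) (hz : 2 ^ j ∣ z) (hz' : ¬ 2 ^ (j + 1) ∣ z) :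
    (2 : ZMod n) ^ (j + 1) ∣ a₁ * x + a₂ * z := by
  have hodd : ∀ y : ZMod n, 2 ^ j ∣ y → ¬ 2 ^ (j + 1) ∣ y → ∃ k, y = 2 ^ j * (2 * k + 1) := by
    rintro _ ⟨y, rfl⟩ hy'
    obtain ⟨k, rfl | rfl⟩ := ZMod.exists_eq_two_mul_or_eq_two_mul_add_one y
    · exact absurd ⟨k, by ring⟩ hy'
    · exact ⟨k, rfl⟩
  obtain ⟨k, rfl⟩ := hodd x hx hx'
  obtain ⟨l, rfl⟩ := hodd z hz hz'
  obtain ⟨s, rfl⟩ := h₁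
  obtain ⟨t, rfl⟩ := h₂
  exact ⟨s * (2 * k + 1) + k + t * (2 * l + 1) + l + 1, by push_cast; ring⟩

variable [NeZero n]

lemma card_image_filter_two_pow_dvd_le_succ (h₁ : Odd a₁) (h₂ : Odd a₂)
    (h₃ : IsUnit (a₃ : ZMod n)) {c : ZMod n → Fin r}
    (hc : ¬ HasRainbowSolution (a₁ : ZMod n) a₂ a₃ 0 c) (j : ℕ) :
    ((univ.filter fun x : ZMod n => 2 ^ j ∣ x).image c).card ≤
      ((univ.filter fun x : ZMod n => 2 ^ (j + 1) ∣ x).image c).card + 1 := by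
  set E := (univ.filter fun x : ZMod n => 2 ^ (j + 1) ∣ x).image c
  have hE : ∀ x : ZMod n, 2 ^ (j + 1) ∣ x → c x ∈ E := fun x hx =>
    mem_image_of_mem c (mem_filter.2 ⟨mem_univ x, hx⟩)
  have hnew : ∀ x z : ZMod n, 2 ^ j ∣ x → 2 ^ j ∣ z → c x ∉ E → c z ∉ E → c x = c z := by
    intro x z hx hz hxE hzE
    by_contra hxz
    obtain ⟨t, ht⟩ :=
      ZMod.two_pow_succ_dvd_mul_add_mul h₁ h₂ hx (mt (hE x) hxE) hz (mt (hE z) hzE)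
    obtain ⟨u, hu⟩ := h₃
    have hw := hE (2 ^ (j + 1) * -(↑u⁻¹ * t)) (dvd_mul_right _ _)
    refine hc ⟨x, z, 2 ^ (j + 1) * -(↑u⁻¹ * t), ?_, hxz, fun h => hxE (h ▸ hw),
      fun h => hzE (h ▸ hw)⟩
    rw [← hu]
    linear_combination ht - 2 ^ (j + 1) * t * u.mul_inv
  set S := (univ.filter fun x : ZMod n => 2 ^ j ∣ x).image c
  calc S.card = (S.filter (· ∈ E)).card + (S.filter (· ∉ E)).card :=
        (card_filter_add_card_filter_not _).symm
    _ ≤ E.card + 1 := by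
        gcongr
        · exact fun y hy => (mem_filter.1 hy).2
        · refine card_le_one.2 fun y hy y' hy' => ?_
          simp only [S, mem_filter, mem_image, mem_univ, true_and] at hy hy'
          obtain ⟨⟨x, hx, rfl⟩, hxE⟩ := hy
          obtain ⟨⟨z, hz, rfl⟩, hzE⟩ := hy'
          exact hnew x z hx hz hxE hzE

end TwoPowFiltration

lemma card_image_le_of_not_hasRainbowSolution {α r : ℕ} {a₁ a₂ a₃ : ℤ} (h₁ : Odd a₁)
    (h₂ : Odd a₂) (h₃ : IsUnit (a₃ : ZMod (2 ^ α))) {c : ZMod (2 ^ α) → Fin r}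
    (hc : ¬ HasRainbowSolution (a₁ : ZMod (2 ^ α)) a₂ a₃ 0 c) :
    (univ.image c).card ≤ α + 1 := by
  have key : ∀ i ≤ α,
      ((univ.filter fun x : ZMod (2 ^ α) => 2 ^ (α - i) ∣ x).image c).card ≤ i + 1 := by
    intro i
    induction i with
    | zero =>
      intro _
      refine card_le_one.2 fun y hy y' hy' => ?_
      have h0 : (2 : ZMod (2 ^ α)) ^ α = 0 := by exact_mod_cast ZMod.natCast_self (2 ^ α)
      simp only [Nat.sub_zero, h0, zero_dvd_iff, mem_image, mem_filter, mem_univ, true_and]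
        at hy hy'
      obtain ⟨_, rfl, rfl⟩ := hy
      obtain ⟨_, rfl, rfl⟩ := hy'
      rfl
    | succ i ih =>
      intro hi
      have hj : α - (i + 1) + 1 = α - i := by omega
      have := card_image_filter_two_pow_dvd_le_succ h₁ h₂ h₃ hc (α - (i + 1))
      rw [hj] at this
      linarith [ih (by omega)]
  simpa using key α le_rfl

theorem stmt_6_general (α : ℕ) (a₁ a₂ a₃ b : ℤ)
    (h₁ : Odd a₁) (h₂ : Odd a₂) (h₃ : Odd a₃) :
    rb (2 ^ α) (a₁ : ZMod (2 ^ α)) (a₂ : ZMod (2 ^ α)) (a₃ : ZMod (2 ^ α))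
      (b : ZMod (2 ^ α)) = α + 2 := by
  have hunit {a : ℤ} (ha : Odd a) : IsUnit (a : ZMod (2 ^ α)) :=
    isUnit_intCast_of_odd (isNilpotent_two_zmod_two_pow α) ha
  obtain ⟨x₀, hx₀⟩ := (hunit ((h₁.add_odd h₂).add_odd h₃)).dvd (a := (b : ZMod (2 ^ α)))
  push_cast at hx₀
  rw [rb_eq_rb_zero hx₀]
  refine rb_eq_of (Nat.succ_pos _) (fun c hc => ?_) (fun m hm => ?_)
  · by_contra hfree
    have := card_image_le_of_not_hasRainbowSolution h₁ h₂ (hunit h₃) hfree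
    rw [image_univ_of_surjective hc, card_univ, Fintype.card_fin] at this
    omega
  · exact ⟨powDvdColoring _ m, powDvdColoring_surjective one_lt_two (by omega),
      not_hasRainbowSolution_powDvdColoring _ m (hunit h₁) (hunit h₂) (hunit h₃)⟩

theorem stmt_6 (α : ℕ) (hα : 1 ≤ α) (a₁ a₂ a₃ b : ℤ)
    (h₁ : Odd a₁) (h₂ : Odd a₂) (h₃ : Odd a₃) :
    rb (2 ^ α) (a₁ : ZMod (2 ^ α)) (a₂ : ZMod (2 ^ α)) (a₃ : ZMod (2 ^ α))
      (b : ZMod (2 ^ α)) = α + 2 :=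
  stmt_6_general α a₁ a₂ a₃ b h₁ h₂ h₃
end
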